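/- In the triangular decomposition setting, for each λ ∈ Ĝ the Verma-type module M(λ) = Λ ⊗_B k_B(λ) has a unique largest proper Λ-submodule I(λ); consequently M(λ) has a unique simple quotient L(λ). -/

import Mathlib

/-!
Write `M = Λ ⧸ Λ·ker χ`. Because `L ⊗ kG ⊗ R ≅ Λ` and `B = kG·R`, there is a linear functional
`φ` on `Λ` with `φ (x * b) = ε x * χ b` for `x ∈ L`, `b ∈ B`; it kills `Λ·ker χ`, hence descends
to `M`. Since `Λ = L·B`, every class in `M` is the class of some `x ∈ L`, and `φ x = ε x`.
If `ε x ≠ 0`, then `x` is a unit (`ker ε` is nilpotent), so its class generates `M`. Thus every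
proper submodule lies in `ker φ`; so does their sum, which is therefore proper because `φ 1 = 1`:
it is the unique maximal submodule.
-/

open TensorProduct

/-- The product map `L ⊗ kG → Λ`, `x ⊗ a ↦ x·ι(a)`. -/
noncomputable def prodLG (k G Λ : Type) [Field k] [CommGroup G] [Ring Λ] [Algebra k Λ]
    (ι : MonoidAlgebra k G →ₐ[k] Λ) (L : Subalgebra k Λ) :
    (L ⊗[k] MonoidAlgebra k G) →ₗ[k] Λ :=
  TensorProduct.lift
    (((LinearMap.mul k Λ).comp (Subalgebra.val L).toLinearMap).compl₂ ι.toLinearMap)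

/-- The triple product map `L ⊗ kG ⊗ R → Λ`, `x ⊗ a ⊗ y ↦ x·ι(a)·y`. -/
noncomputable def triProd (k G Λ : Type) [Field k] [CommGroup G] [Ring Λ] [Algebra k Λ]
    (ι : MonoidAlgebra k G →ₐ[k] Λ) (L R : Subalgebra k Λ) :
    ((L ⊗[k] MonoidAlgebra k G) ⊗[k] R) →ₗ[k] Λ :=
  TensorProduct.lift
    (((LinearMap.mul k Λ).comp (prodLG k G Λ ι L)).compl₂ (Subalgebra.val R).toLinearMap)

theorem Submodule.exists_greatest_ne_top {R M A F : Type*} [Ring R] [AddCommGroup M]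
    [Module R M] [AddCommMonoid A] [FunLike F M A] [AddMonoidHomClass F M A] (f : F)
    (hgen : ∀ m, f m ≠ 0 → R ∙ m = ⊤) {m₀ : M} (hm₀ : f m₀ ≠ 0) :
    ∃ I : Submodule R M, I ≠ ⊤ ∧ (∀ N : Submodule R M, N ≠ ⊤ → N ≤ I) ∧
      IsSimpleModule R (M ⧸ I) := by
  have hker : ∀ N : {N : Submodule R M // N ≠ ⊤}, ∀ m ∈ N.1, f m = 0 := fun N m hm => by
    by_contra h
    exact N.2 (eq_top_iff.mpr ((hgen m h).ge.trans ((span_singleton_le_iff_mem m _).mpr hm)))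
  set I := ⨆ N : {N : Submodule R M // N ≠ ⊤}, N.1
  have hI : I ≠ ⊤ := fun h => hm₀ <|
    iSup_induction (motive := fun m => f m = 0) _ (h ▸ mem_top : m₀ ∈ I) hker (map_zero f)
      fun _ _ hx hy => by rw [map_add, hx, hy, add_zero]
  have hle : ∀ N : Submodule R M, N ≠ ⊤ → N ≤ I := fun N hN =>
    le_iSup (fun N : {N : Submodule R M // N ≠ ⊤} => N.1) ⟨N, hN⟩
  refine ⟨I, hI, hle, isSimpleModule_iff_isCoatom.mpr ⟨hI, fun N hN => ?_⟩⟩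
  by_contra h
  exact hN.not_ge (hle N h)

theorem Submodule.span_singleton_mk_eq_top_of_isUnit {R : Type*} [Ring R] (I : Ideal R) {u : R}
    (hu : IsUnit u) : span R {(Quotient.mk u : R ⧸ I)} = ⊤ := by
  rw [← mul_one u, ← smul_eq_mul, Quotient.mk_smul, span_singleton_smul_eq hu, eq_top_iff]
  rintro m -
  obtain ⟨r, rfl⟩ := Quotient.mk_surjective _ m
  have := smul_mem _ r (mem_span_singleton_self (R := R) (Quotient.mk (1 : R) : R ⧸ I))
  rwa [← Quotient.mk_smul, smul_eq_mul, mul_one] at this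

theorem Submodule.exists_quotient_linearMap {R S M A : Type*} [Ring R] [Ring S] [AddCommGroup M]
    [Module R M] [Module S M] [SMul S R] [IsScalarTower S R M] [AddCommGroup A] [Module S A]
    (P : Submodule R M) (φ : M →ₗ[S] A) (hφ : ∀ z ∈ P, φ z = 0) :
    ∃ f : M ⧸ P →ₗ[S] A, ∀ z, f (Quotient.mk z) = φ z :=
  ⟨(P.restrictScalars S).liftQ φ hφ ∘ₗ (Quotient.restrictScalarsEquiv S P).symm.toLinearMap,
    fun _ => rfl⟩

theorem AlgHom.isUnit_of_apply_ne_zero {k A : Type*} [Field k] [Ring A] [Algebra k A]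
    (ε : A →ₐ[k] k) (hnil : IsNilpotent (RingHom.ker ε)) {x : A} (hx : ε x ≠ 0) :
    IsUnit x := by
  obtain ⟨n, hn⟩ := hnil
  have hsub : x - algebraMap k A (ε x) ∈ RingHom.ker ε := by simp
  have hsub_nil : IsNilpotent (x - algebraMap k A (ε x)) :=
    ⟨n, by simpa [hn] using Ideal.pow_mem_pow hsub n⟩
  simpa using hsub_nil.isUnit_add_left_of_commute
    ((isUnit_iff_ne_zero.mpr hx).map (algebraMap k A)) (Algebra.commute_algebraMap_left _ _).symm

section InducedModule

variable {k Λ : Type*} [Field k] [Ring Λ] [Algebra k Λ] {L B : Subalgebra k Λ}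

theorem Subalgebra.left_le_of_toSubmodule_eq_mul {A₁ A₂ : Subalgebra k Λ}
    (h : toSubmodule B = toSubmodule A₁ * toSubmodule A₂) : A₁ ≤ B := fun x hx => by
  rw [← mem_toSubmodule, h]
  simpa using Submodule.mul_mem_mul ((mem_toSubmodule _).mpr hx)
    ((mem_toSubmodule _).mpr (one_mem A₂))

theorem Subalgebra.right_le_of_toSubmodule_eq_mul {A₁ A₂ : Subalgebra k Λ}
    (h : toSubmodule B = toSubmodule A₁ * toSubmodule A₂) : A₂ ≤ B := fun x hx => by
  rw [← mem_toSubmodule, h]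
  simpa using Submodule.mul_mem_mul ((mem_toSubmodule _).mpr (one_mem A₁))
    ((mem_toSubmodule _).mpr hx)

/-- `Λ ⧸ χ.spanKer` is the induced module `Λ ⊗_B k_χ` of the paper. -/
abbrev AlgHom.spanKer (χ : B →ₐ[k] k) : Ideal Λ :=
  Ideal.span (B.val '' (RingHom.ker χ.toRingHom : Set B))

theorem AlgHom.sub_algebraMap_mem_spanKer (χ : B →ₐ[k] k) (b : B) :
    (b : Λ) - algebraMap k Λ (χ b) ∈ χ.spanKer :=
  Ideal.subset_span ⟨b - algebraMap k B (χ b), by simp, by simp⟩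

theorem AlgHom.exists_sub_mem_spanKer (χ : B →ₐ[k] k)
    (hLB : ⊤ ≤ Subalgebra.toSubmodule L * Subalgebra.toSubmodule B) (r : Λ) :
    ∃ x : L, r - (x : Λ) ∈ χ.spanKer := by
  refine Submodule.mul_induction_on (C := fun r => ∃ x : L, r - (x : Λ) ∈ χ.spanKer)
    (hLB (Submodule.mem_top (x := r))) (fun x hx b hb => ?_) ?_
  · refine ⟨χ ⟨b, hb⟩ • ⟨x, hx⟩, ?_⟩
    have := Ideal.mul_mem_left _ x (χ.sub_algebraMap_mem_spanKer ⟨b, hb⟩)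
    simpa [mul_sub, Algebra.smul_def, Algebra.commutes] using this
  · rintro r₁ r₂ ⟨x₁, hx₁⟩ ⟨x₂, hx₂⟩
    exact ⟨x₁ + x₂, by simpa [add_sub_add_comm] using add_mem hx₁ hx₂⟩

theorem AlgHom.map_eq_zero_of_mem_spanKer (χ : B →ₐ[k] k)
    (hLB : ⊤ ≤ Subalgebra.toSubmodule L * Subalgebra.toSubmodule B) (ε : L → k)
    (φ : Λ →ₗ[k] k) (hφ : ∀ (x : L) (b : B), φ (x * b) = ε x * χ b) {z : Λ}
    (hz : z ∈ χ.spanKer) : φ z = 0 := by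
  suffices ∀ r, φ (r * z) = 0 by simpa using this 1
  induction hz using Submodule.span_induction with
  | mem _ hs =>
    obtain ⟨c, hc, rfl⟩ := hs
    intro r
    refine Submodule.mul_induction_on (C := fun r => φ (r * c) = 0)
      (hLB (Submodule.mem_top (x := r))) (fun x hx b hb => ?_)
      (fun _ _ h₁ h₂ => by rw [add_mul, map_add, h₁, h₂, add_zero])
    have : φ (x * ((⟨b, hb⟩ * c : B) : Λ)) = 0 := by
      rw [hφ ⟨x, hx⟩, map_mul, show χ c = 0 from hc, mul_zero, mul_zero]
    simpa [mul_assoc] using this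
  | zero => simp
  | add _ _ _ _ h₁ h₂ => intro r; rw [mul_add, map_add, h₁, h₂, add_zero]
  | smul a _ _ h => intro r; rw [smul_eq_mul, ← mul_assoc]; exact h _

end InducedModule

section Triangular

variable {k G Λ : Type} [Field k] [CommGroup G] [Ring Λ] [Algebra k Λ]
  {ι : MonoidAlgebra k G →ₐ[k] Λ} {L R B : Subalgebra k Λ}

theorem triProd_tmul (x : L) (a : MonoidAlgebra k G) (y : R) :
    triProd k G Λ ι L R ((x ⊗ₜ a) ⊗ₜ y) = x * ι a * y := by
  simp [triProd, prodLG]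

theorem range_triProd_le : LinearMap.range (triProd k G Λ ι L R) ≤
    Subalgebra.toSubmodule L * Subalgebra.toSubmodule ι.range * Subalgebra.toSubmodule R := by
  rintro _ ⟨t, rfl⟩
  induction t using TensorProduct.induction_on with
  | zero => simp
  | add _ _ h₁ h₂ => rw [map_add]; exact add_mem h₁ h₂
  | tmul t y =>
    induction t using TensorProduct.induction_on with
    | zero => simp
    | add _ _ h₁ h₂ => rw [TensorProduct.add_tmul, map_add]; exact add_mem h₁ h₂
    | tmul x a =>
      rw [triProd_tmul]
      exact Submodule.mul_mem_mul (Submodule.mul_mem_mul x.2 ⟨a, rfl⟩) y.2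

theorem top_le_mul_of_surjective_triProd (hTri : Function.Surjective (triProd k G Λ ι L R))
    (hB : Subalgebra.toSubmodule B = Subalgebra.toSubmodule ι.range * Subalgebra.toSubmodule R) :
    ⊤ ≤ Subalgebra.toSubmodule L * Subalgebra.toSubmodule B := by
  rw [hB, ← mul_assoc, ← LinearMap.range_eq_top.mpr hTri]
  exact range_triProd_le

theorem exists_linearMap_triProd (hTri : Function.Bijective (triProd k G Λ ι L R))
    (f : L →ₗ[k] k) (g : MonoidAlgebra k G →ₗ[k] k) (h : R →ₗ[k] k) :
    ∃ φ : Λ →ₗ[k] k, ∀ (x : L) a (y : R), φ (x * ι a * y) = f x * g a * h y := by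
  let ψ := TensorProduct.lift
    ((LinearMap.mul k k).compl₁₂ (TensorProduct.lift ((LinearMap.mul k k).compl₁₂ f g)) h)
  refine ⟨ψ ∘ₗ (LinearEquiv.ofBijective _ hTri).symm.toLinearMap, fun x a y => ?_⟩
  rw [← triProd_tmul]
  simp [ψ, LinearEquiv.ofBijective_symm_apply_apply]

theorem exists_linearMap_mul_eq (hTri : Function.Bijective (triProd k G Λ ι L R))
    (hB : Subalgebra.toSubmodule B = Subalgebra.toSubmodule ι.range * Subalgebra.toSubmodule R)
    (ε : L →ₗ[k] k) (χ : B →ₐ[k] k) :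
    ∃ φ : Λ →ₗ[k] k, ∀ (x : L) (b : B), φ (x * b) = ε x * χ b := by
  have hιB : ∀ a, ι a ∈ B := fun a => Subalgebra.left_le_of_toSubmodule_eq_mul hB ⟨a, rfl⟩
  have hRB : R ≤ B := Subalgebra.right_le_of_toSubmodule_eq_mul hB
  obtain ⟨φ, hφ⟩ := exists_linearMap_triProd hTri ε
    (χ.comp (ι.codRestrict B hιB)).toLinearMap (χ.comp (Subalgebra.inclusion hRB)).toLinearMap
  have hmemB : ∀ {c}, c ∈ Subalgebra.toSubmodule ι.range * Subalgebra.toSubmodule R → c ∈ B :=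
    fun hc => by rwa [← hB] at hc
  refine ⟨φ, fun x ⟨b, hb⟩ => ?_⟩
  have hb' : b ∈ Subalgebra.toSubmodule ι.range * Subalgebra.toSubmodule R := hB ▸ hb
  induction hb' using Submodule.mul_induction_on' with
  | mem_mul_mem _ hm y hy =>
    obtain ⟨a, rfl⟩ := hm
    change φ (x * (ι a * y)) = ε x * χ (⟨ι a, hιB a⟩ * ⟨y, hRB hy⟩)
    rw [← mul_assoc, hφ x a ⟨y, hy⟩, map_mul, mul_assoc]
    rfl
  | add b₁ h₁ b₂ h₂ ih₁ ih₂ =>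
    change φ (x * (b₁ + b₂)) = ε x * χ (⟨b₁, hmemB h₁⟩ + ⟨b₂, hmemB h₂⟩)
    rw [mul_add, map_add, map_add, mul_add, ih₁, ih₂]

end Triangular

theorem stmt6_general (k G Λ : Type) [Field k] [CommGroup G]
    [Ring Λ] [Algebra k Λ]
    (ι : MonoidAlgebra k G →ₐ[k] Λ)
    (L R : Subalgebra k Λ)
    (hTri : Function.Bijective (triProd k G Λ ι L R))
    (B : Subalgebra k Λ)
    (hB : Subalgebra.toSubmodule B =
      Subalgebra.toSubmodule ι.range * Subalgebra.toSubmodule R)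
    (εL : L →ₐ[k] k)
    (hLnil : ∃ n : ℕ, (RingHom.ker εL.toRingHom) ^ n = ⊥)
    (χB : B →ₐ[k] k) :
    ∃ Imax : Submodule Λ
        (Λ ⧸ Ideal.span ((Subalgebra.val B) '' (RingHom.ker χB.toRingHom : Set B))),
      Imax ≠ ⊤ ∧
      (∀ N : Submodule Λ
          (Λ ⧸ Ideal.span ((Subalgebra.val B) '' (RingHom.ker χB.toRingHom : Set B))),
        N ≠ ⊤ → N ≤ Imax) ∧
      IsSimpleModule Λ
        ((Λ ⧸ Ideal.span ((Subalgebra.val B) '' (RingHom.ker χB.toRingHom : Set B)))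
          ⧸ Imax) := by
  have hLB := top_le_mul_of_surjective_triProd hTri.2 hB
  obtain ⟨φ, hφ⟩ := exists_linearMap_mul_eq hTri hB εL.toLinearMap χB
  have hφL : ∀ x : L, φ x = εL x := fun x => by simpa using hφ x 1
  obtain ⟨f, hf⟩ := χB.spanKer.exists_quotient_linearMap φ
    fun _ hz => χB.map_eq_zero_of_mem_spanKer hLB εL φ hφ hz
  refine Submodule.exists_greatest_ne_top f (fun m hm => ?_)
    (m₀ := Submodule.Quotient.mk 1)
    (by rw [hf, ← L.coe_one, hφL, map_one]; exact one_ne_zero)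
  obtain ⟨r, rfl⟩ := Submodule.Quotient.mk_surjective _ m
  obtain ⟨x, hx⟩ := χB.exists_sub_mem_spanKer hLB r
  rw [(Submodule.Quotient.eq _).mpr hx] at hm ⊢
  rw [hf, hφL] at hm
  exact Submodule.span_singleton_mk_eq_top_of_isUnit _
    ((εL.isUnit_of_apply_ne_zero hLnil hm).map L.val)

/-- In the triangular decomposition setting, for each `λ ∈ Ĝ` the Verma-type module
`M(λ) = Λ ⊗_B k_B(λ)` — realized as `Λ/Λ·ker χ_B^λ` — has a unique largest proper
`Λ`-submodule `I(λ)`; consequently `M(λ)` has a unique simple quotient `L(λ)`. -/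
theorem stmt6 (k G Λ : Type) [Field k] [CommGroup G] [Fintype G]
    (hchar : (Fintype.card G : k) ≠ 0)
    (hroot : ∃ ζ : k, IsPrimitiveRoot ζ (Monoid.exponent G))
    [Ring Λ] [Algebra k Λ] [FiniteDimensional k Λ]
    (ι : MonoidAlgebra k G →ₐ[k] Λ) (hι : Function.Injective ι)
    (L R : Subalgebra k Λ)
    (hTri : Function.Bijective (triProd k G Λ ι L R))
    (A B : Subalgebra k Λ)
    (hA : Subalgebra.toSubmodule A =
      Subalgebra.toSubmodule L * Subalgebra.toSubmodule ι.range)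
    (hB : Subalgebra.toSubmodule B =
      Subalgebra.toSubmodule ι.range * Subalgebra.toSubmodule R)
    (εL : L →ₐ[k] k) (εR : R →ₐ[k] k)
    (hLnil : ∃ n : ℕ, (RingHom.ker εL.toRingHom) ^ n = ⊥)
    (hRnil : ∃ n : ℕ, (RingHom.ker εR.toRingHom) ^ n = ⊥)
    (hII_L : Subalgebra.toSubmodule ι.range *
        Submodule.map (Subalgebra.val L).toLinearMap
          ((RingHom.ker εL.toRingHom).restrictScalars k) =
      Submodule.map (Subalgebra.val L).toLinearMap
          ((RingHom.ker εL.toRingHom).restrictScalars k) *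
        Subalgebra.toSubmodule ι.range)
    (hII_R : Submodule.map (Subalgebra.val R).toLinearMap
          ((RingHom.ker εR.toRingHom).restrictScalars k) *
        Subalgebra.toSubmodule ι.range =
      Subalgebra.toSubmodule ι.range *
        Submodule.map (Subalgebra.val R).toLinearMap
          ((RingHom.ker εR.toRingHom).restrictScalars k))
    (lam : G →* kˣ)
    (χB : B →ₐ[k] k)
    (hχB_G : ∀ (g : G) (hg : ι (MonoidAlgebra.of k G g) ∈ B),
      χB ⟨ι (MonoidAlgebra.of k G g), hg⟩ = lam g)
    (hχB_R : ∀ (y : R) (hy : (y : Λ) ∈ B), χB ⟨(y : Λ), hy⟩ = εR y) :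
    ∃ Imax : Submodule Λ
        (Λ ⧸ Ideal.span ((Subalgebra.val B) '' (RingHom.ker χB.toRingHom : Set B))),
      Imax ≠ ⊤ ∧
      (∀ N : Submodule Λ
          (Λ ⧸ Ideal.span ((Subalgebra.val B) '' (RingHom.ker χB.toRingHom : Set B))),
        N ≠ ⊤ → N ≤ Imax) ∧
      IsSimpleModule Λ
        ((Λ ⧸ Ideal.span ((Subalgebra.val B) '' (RingHom.ker χB.toRingHom : Set B)))
          ⧸ Imax) :=
  stmt6_general k G Λ ι L R hTri B hB εL hLnil χB
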